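/- arXiv:2110.04961 — 10 statements merged into one kernel-verified Lean document; each statement's English description precedes it below -/
import Mathlib

section
/- For vectors R, r in ℝ^n with positive part [·]^+ taken componentwise, if the inner product ⟨r, [R]^+⟩ = 0, then ⟨[R + r]^+, [R]^+⟩ ≥ ‖[R]^+‖₂². -/
open Finset

theorem stmt_0 (n : ℕ) (R r : Fin n → ℝ)
    (h : ∑ i, r i * max (R i) 0 = 0) :
    ∑ i, max (R i + r i) 0 * max (R i) 0 ≥ ∑ i, (max (R i) 0) ^ 2 := by
  have key : ∀ i : Fin n, max (R i + r i) 0 * max (R i) 0 ≥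
      (max (R i) 0) ^ 2 + r i * max (R i) 0 := by
    intro i
    have h0 : (0:ℝ) ≤ max (R i) 0 := le_max_right _ _
    have h1 : R i + r i ≤ max (R i + r i) 0 := le_max_left _ _
    have h2 : R i * max (R i) 0 = (max (R i) 0) ^ 2 := by
      rcases le_or_gt (R i) 0 with hc | hc
      · simp [max_eq_right hc]
      · simp [max_eq_left hc.le]; ring
    nlinarith [mul_le_mul_of_nonneg_right h1 h0]
  calc ∑ i, max (R i + r i) 0 * max (R i) 0
      ≥ ∑ i, ((max (R i) 0) ^ 2 + r i * max (R i) 0) :=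
        Finset.sum_le_sum fun i _ => key i
    _ = ∑ i, (max (R i) 0) ^ 2 := by rw [Finset.sum_add_distrib, h, add_zero]
end

section
/- For vectors R, r in ℝ^n, if ⟨r, [R]^+⟩ = 0 and ‖[R]^+‖₂ > 0, then ‖[R]^+‖₂ ≤ ‖[R + r]^+‖₂. -/
open Finset

theorem stmt_1 (n : ℕ) (R r : Fin n → ℝ)
    (h : ∑ i, r i * max (R i) 0 = 0)
    (hpos : 0 < Real.sqrt (∑ i, (max (R i) 0) ^ 2)) :
    Real.sqrt (∑ i, (max (R i) 0) ^ 2) ≤ Real.sqrt (∑ i, (max (R i + r i) 0) ^ 2) := by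
  apply Real.sqrt_le_sqrt
  have key : ∀ i, (max (R i) 0) ^ 2 + 2 * (r i * max (R i) 0) ≤ (max (R i + r i) 0) ^ 2 := by
    intro i
    rcases le_or_gt (R i) 0 with hR | hR
    · rw [max_eq_right hR]
      norm_num
    · rw [max_eq_left hR.le]
      rcases le_or_gt (R i + r i) 0 with hs | hs
      · rw [max_eq_right hs]; nlinarith
      · rw [max_eq_left hs.le]; nlinarith [sq_nonneg (r i)]
  calc ∑ i, (max (R i) 0) ^ 2
      = ∑ i, ((max (R i) 0) ^ 2 + 2 * (r i * max (R i) 0)) := by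
        rw [Finset.sum_add_distrib, ← Finset.mul_sum, h]; ring
    _ ≤ ∑ i, (max (R i + r i) 0) ^ 2 := Finset.sum_le_sum fun i _ => key i
end

section
/- For vectors R, r in ℝ^n, if ⟨r, [R]^+⟩ = 0, then ‖[R + r]^+‖₂² ≤ ‖[R]^+‖₂² + ‖r‖₂². -/
open Finset

theorem stmt_2 (n : ℕ) (R r : Fin n → ℝ)
    (h : ∑ i, r i * max (R i) 0 = 0) :
    ∑ i, (max (R i + r i) 0) ^ 2 ≤ ∑ i, (max (R i) 0) ^ 2 + ∑ i, (r i) ^ 2 := by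
  have key : ∀ i, (max (R i + r i) 0) ^ 2 ≤
      (max (R i) 0) ^ 2 + 2 * (r i * max (R i) 0) + (r i) ^ 2 := by
    intro i
    rcases max_cases (R i) 0 with ⟨h1, h2⟩ | ⟨h1, h2⟩ <;>
      rcases max_cases (R i + r i) 0 with ⟨h3, h4⟩ | ⟨h3, h4⟩ <;>
      rw [h1, h3] <;> nlinarith
  calc ∑ i, (max (R i + r i) 0) ^ 2
      ≤ ∑ i, ((max (R i) 0) ^ 2 + 2 * (r i * max (R i) 0) + (r i) ^ 2) :=
        Finset.sum_le_sum fun i _ => key i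
    _ = ∑ i, (max (R i) 0) ^ 2 + 2 * ∑ i, r i * max (R i) 0 + ∑ i, (r i) ^ 2 := by
        rw [Finset.sum_add_distrib, Finset.sum_add_distrib, Finset.mul_sum]
    _ = ∑ i, (max (R i) 0) ^ 2 + ∑ i, (r i) ^ 2 := by rw [h]; ring
end

section
/- For vectors Q, r in ℝ^n with Q ≥ 0 componentwise, if ⟨r, Q⟩ = 0 and ‖Q‖₂ > 0, then ‖Q‖₂² ≤ ‖[Q + r]^+‖₂² ≤ ‖Q‖₂² + ‖r‖₂². -/
open Finset

theorem stmt_3 (n : ℕ) (Q r : Fin n → ℝ)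
    (hQ : ∀ i, 0 ≤ Q i)
    (horth : ∑ i, r i * Q i = 0)
    (hpos : 0 < Real.sqrt (∑ i, (Q i) ^ 2)) :
    ∑ i, (Q i) ^ 2 ≤ ∑ i, (max (Q i + r i) 0) ^ 2 ∧
      ∑ i, (max (Q i + r i) 0) ^ 2 ≤ ∑ i, (Q i) ^ 2 + ∑ i, (r i) ^ 2 := by
  constructor
  · have h : ∀ i, (Q i) ^ 2 + 2 * (r i * Q i) ≤ (max (Q i + r i) 0) ^ 2 := by
      intro i
      rcases le_or_gt 0 (Q i + r i) with h | h
      · rw [max_eq_left h]; nlinarith [sq_nonneg (r i)]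
      · rw [max_eq_right h.le]
        have hr : r i < 0 := by linarith [hQ i]
        nlinarith [hQ i]
    calc ∑ i, (Q i) ^ 2 = ∑ i, ((Q i) ^ 2 + 2 * (r i * Q i)) := by
          rw [Finset.sum_add_distrib, ← Finset.mul_sum, horth]; ring
      _ ≤ _ := Finset.sum_le_sum fun i _ => h i
  · have h : ∀ i, (max (Q i + r i) 0) ^ 2 ≤ (Q i) ^ 2 + 2 * (r i * Q i) + (r i) ^ 2 := by
      intro i
      rcases le_or_gt 0 (Q i + r i) with h | h
      · rw [max_eq_left h]; ring_nf; nlinarith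
      · rw [max_eq_right h.le]; nlinarith [sq_nonneg (Q i + r i)]
    calc ∑ i, (max (Q i + r i) 0) ^ 2 ≤ ∑ i, ((Q i) ^ 2 + 2 * (r i * Q i) + (r i) ^ 2) :=
          Finset.sum_le_sum fun i _ => h i
      _ = ∑ i, (Q i) ^ 2 + ∑ i, (r i) ^ 2 := by
          simp [Finset.sum_add_distrib, ← Finset.mul_sum, horth]
end

section
/- Let r ∈ ℝ^n with ‖r‖₂ ≤ L, let x, x' ∈ Δ^n be probability vectors, and let β' ≥ β > 0 be such that β x = [R]^+ and β' x' = [R + r]^+ for some R ∈ ℝ^n with ⟨r, [R]^+⟩ = 0. Then ⟨r, x'⟩ ≤ L · √(‖β' x'‖₂² − ‖β x‖₂²) / ‖β' x'‖₂. -/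
open Finset

theorem stmt_7 (n : ℕ) (r R x x' : Fin n → ℝ) (L β β' : ℝ)
    (hr : Real.sqrt (∑ i, (r i) ^ 2) ≤ L)
    (hx0 : ∀ i, 0 ≤ x i) (hx1 : ∑ i, x i = 1)
    (hx'0 : ∀ i, 0 ≤ x' i) (hx'1 : ∑ i, x' i = 1)
    (hβ : 0 < β) (hββ' : β ≤ β')
    (hβx : ∀ i, β * x i = max (R i) 0)
    (hβ'x' : ∀ i, β' * x' i = max (R i + r i) 0)
    (horth : ∑ i, r i * max (R i) 0 = 0) :
    ∑ i, r i * x' i ≤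
      L * Real.sqrt ((∑ i, (β' * x' i) ^ 2) - ∑ i, (β * x i) ^ 2) /
        Real.sqrt (∑ i, (β' * x' i) ^ 2) := by
  have hβ' : 0 < β' := lt_of_lt_of_le hβ hββ'
  set a : Fin n → ℝ := fun i => β * x i with ha
  set b : Fin n → ℝ := fun i => β' * x' i with hb
  have ha0 : ∀ i, 0 ≤ a i := fun i => mul_nonneg hβ.le (hx0 i)
  have hb0 : ∀ i, 0 ≤ b i := fun i => mul_nonneg hβ'.le (hx'0 i)
  set S : ℝ := ∑ i, (b i) ^ 2 with hS
  set A : ℝ := ∑ i, (a i) ^ 2 with hA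
  -- sum of b = β'
  have hsumb : ∑ i, b i = β' := by
    simp only [hb, ← Finset.mul_sum, hx'1, mul_one]
  -- orthogonality: ∑ r i * a i = 0
  have horth' : ∑ i, r i * a i = 0 := by
    rw [show (∑ i, r i * a i) = ∑ i, r i * max (R i) 0 from
      Finset.sum_congr rfl fun i _ => by rw [ha]; simp [hβx i]]
    exact horth
  -- ⟨a,R⟩ = A
  have haR : ∑ i, a i * R i = A := by
    refine Finset.sum_congr rfl fun i _ => ?_
    have h := hβx i
    rcases le_or_gt (R i) 0 with h0 | h0
    · have : a i = 0 := by rw [ha]; simp [h, max_eq_right h0]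
      simp [this]
    · have : a i = R i := by rw [ha]; simp [h, max_eq_left h0.le]
      rw [this, sq]
  -- b i ≥ R i + r i
  have hbge : ∀ i, R i + r i ≤ b i := fun i => by
    rw [hb]; simp [hβ'x' i, le_max_left]
  -- ⟨a,b⟩ ≥ A
  have hab : A ≤ ∑ i, a i * b i := by
    calc A = ∑ i, a i * R i + ∑ i, r i * a i := by rw [haR, horth']; ring
    _ = ∑ i, a i * (R i + r i) := by
        rw [← Finset.sum_add_distrib]; exact Finset.sum_congr rfl fun i _ => by ring
    _ ≤ ∑ i, a i * b i :=
        Finset.sum_le_sum fun i _ => mul_le_mul_of_nonneg_left (hbge i) (ha0 i)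
  -- ⟨b, R + r⟩ = S
  have hbRr : ∑ i, b i * (R i + r i) = S := by
    refine Finset.sum_congr rfl fun i _ => ?_
    have h := hβ'x' i
    rcases le_or_gt (R i + r i) 0 with h0 | h0
    · have : b i = 0 := by rw [hb]; simp [h, max_eq_right h0]
      simp [this]
    · have : b i = R i + r i := by rw [hb]; simp [h, max_eq_left h0.le]
      rw [this, sq]
  -- S > 0
  have hSpos : 0 < S := by
    by_contra hc
    push_neg at hc
    have hS0 : S = 0 := le_antisymm hc (Finset.sum_nonneg fun i _ => sq_nonneg _)
    have : ∀ i ∈ Finset.univ, (b i) ^ 2 = 0 :=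
      (Finset.sum_eq_zero_iff_of_nonneg fun i _ => sq_nonneg _).mp hS0
    have hb0' : ∀ i, b i = 0 := fun i => by
      have := this i (Finset.mem_univ i); exact pow_eq_zero_iff (two_ne_zero) |>.mp this
    have : (0 : ℝ) = β' := by rw [← hsumb]; simp [hb0']
    exact absurd this.symm (ne_of_gt hβ')
  have hsqS : 0 < Real.sqrt S := Real.sqrt_pos.mpr hSpos
  -- ‖b - a‖² ≤ S - A
  have hdiff : ∑ i, (b i - a i) ^ 2 ≤ S - A := by
    have expand : ∑ i, (b i - a i) ^ 2 = S - 2 * (∑ i, a i * b i) + A := by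
      simp only [hS, hA, Finset.mul_sum, ← Finset.sum_sub_distrib, ← Finset.sum_add_distrib]
      exact Finset.sum_congr rfl fun i _ => by ring
    rw [expand]; nlinarith [hab]
  -- ⟨r, b⟩ ≤ L * √(S - A)
  have hL0 : 0 ≤ L := le_trans (Real.sqrt_nonneg _) hr
  have key : ∑ i, r i * b i ≤ L * Real.sqrt (S - A) := by
    have h1 : ∑ i, r i * b i = ∑ i, r i * (b i - a i) := by
      rw [show (∑ i, r i * (b i - a i)) = ∑ i, r i * b i - ∑ i, r i * a i by
        rw [← Finset.sum_sub_distrib]; exact Finset.sum_congr rfl fun i _ => by ring,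
        horth', sub_zero]
    rw [h1]
    have cs : (∑ i, r i * (b i - a i)) ^ 2 ≤ (∑ i, (r i) ^ 2) * ∑ i, (b i - a i) ^ 2 :=
      Finset.sum_mul_sq_le_sq_mul_sq Finset.univ r (fun i => b i - a i)
    have h2 : ∑ i, r i * (b i - a i) ≤
        Real.sqrt (∑ i, (r i) ^ 2) * Real.sqrt (∑ i, (b i - a i) ^ 2) := by
      rw [← Real.sqrt_mul (Finset.sum_nonneg fun i _ => sq_nonneg _)]
      calc ∑ i, r i * (b i - a i) ≤ |∑ i, r i * (b i - a i)| := le_abs_self _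
        _ = Real.sqrt ((∑ i, r i * (b i - a i)) ^ 2) := (Real.sqrt_sq_eq_abs _).symm
        _ ≤ _ := Real.sqrt_le_sqrt cs
    refine h2.trans (mul_le_mul hr (Real.sqrt_le_sqrt hdiff) (Real.sqrt_nonneg _) hL0)
  -- ∑ r x' = ⟨r,b⟩ / β'
  have hrx' : ∑ i, r i * x' i = (∑ i, r i * b i) / β' := by
    rw [Finset.sum_div]
    exact Finset.sum_congr rfl fun i _ => by rw [hb]; field_simp
  -- √S ≤ β'
  have hsqSle : Real.sqrt S ≤ β' := by
    have h1 : S ≤ β' ^ 2 := by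
      rw [← hsumb, hS]
      exact Finset.sum_sq_le_sq_sum_of_nonneg (fun i _ => hb0 i)
    calc Real.sqrt S ≤ Real.sqrt (β' ^ 2) := Real.sqrt_le_sqrt h1
      _ = β' := by rw [Real.sqrt_sq hβ'.le]
  calc ∑ i, r i * x' i = (∑ i, r i * b i) / β' := hrx'
    _ ≤ L * Real.sqrt (S - A) / β' := by
        exact (div_le_div_iff_of_pos_right hβ').mpr key
    _ ≤ L * Real.sqrt (S - A) / Real.sqrt S :=
        div_le_div_of_nonneg_left (mul_nonneg hL0 (Real.sqrt_nonneg _)) hsqS hsqSle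
end

section
/- Let Q ∈ ℝ^n with Q ≥ 0 componentwise, r ∈ ℝ^n, and let β, β' > 0 and probability vectors x, x' ∈ Δ^n satisfy β x = Q and β' x' = [Q + r]^+. Then ⟨β x − β' x' + r, x'⟩ ≤ 0. -/
open Finset

theorem stmt_9 (n : ℕ) (Q r x x' : Fin n → ℝ) (β β' : ℝ)
    (hQ : ∀ i, 0 ≤ Q i)
    (hβ : 0 < β) (hβ' : 0 < β')
    (hx0 : ∀ i, 0 ≤ x i) (hx1 : ∑ i, x i = 1)
    (hx'0 : ∀ i, 0 ≤ x' i) (hx'1 : ∑ i, x' i = 1)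
    (hβx : ∀ i, β * x i = Q i)
    (hβ'x' : ∀ i, β' * x' i = max (Q i + r i) 0) :
    ∑ i, (β * x i - β' * x' i + r i) * x' i ≤ 0 := by
  apply Finset.sum_nonpos
  intro i _
  have h1 : β * x i - β' * x' i + r i ≤ 0 := by
    rw [hβx i, hβ'x' i]
    have := le_max_left (Q i + r i) 0
    linarith
  exact mul_nonpos_of_nonpos_of_nonneg h1 (hx'0 i)
end

section
/- Fix L ∈ ℝ^n and β > 0. The minimizer over the probability simplex Δ^n of the function x ↦ ⟨L, x⟩ + (β/2)‖x‖₂² is x* = [α − L]^+ / β, where α ∈ ℝ is the unique real number such that ‖[α − L]^+‖₁ = β. -/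
open Finset

theorem stmt_10 (n : ℕ) (hn : 0 < n) (L : Fin n → ℝ) (β : ℝ) (hβ : 0 < β) :
    (∃! α : ℝ, ∑ i, max (α - L i) 0 = β) ∧
    ∀ α : ℝ, (∑ i, max (α - L i) 0 = β) →
      (∀ i, 0 ≤ max (α - L i) 0 / β) ∧
      (∑ i, max (α - L i) 0 / β = 1) ∧
      ∀ x : Fin n → ℝ, (∀ i, 0 ≤ x i) → (∑ i, x i = 1) →
        (∑ i, L i * (max (α - L i) 0 / β)) + β / 2 * ∑ i, (max (α - L i) 0 / β) ^ 2 ≤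
          (∑ i, L i * x i) + β / 2 * ∑ i, (x i) ^ 2 := by
  have hne : (Finset.univ : Finset (Fin n)).Nonempty := ⟨⟨0, hn⟩, Finset.mem_univ _⟩
  set f : ℝ → ℝ := fun α => ∑ i, max (α - L i) 0 with hf
  have hmono : ∀ {a b : ℝ}, a ≤ b → ∀ i : Fin n, max (a - L i) 0 ≤ max (b - L i) 0 := by
    intro a b hab i
    exact max_le_max (by linarith) le_rfl
  constructor
  · -- existence and uniqueness
    have hcont : Continuous f := by
      apply continuous_finset_sum
      intro i _
      exact (continuous_id.sub continuous_const).max continuous_const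
    set a := Finset.univ.inf' hne L with ha
    set b := Finset.univ.sup' hne L + β with hb
    have hab : a ≤ b := by
      have h1 : a ≤ L ⟨0, hn⟩ := Finset.inf'_le _ (Finset.mem_univ _)
      have h2 : L ⟨0, hn⟩ ≤ Finset.univ.sup' hne L := Finset.le_sup' _ (Finset.mem_univ _)
      simp only [hb]; linarith
    have hfa : f a = 0 := by
      apply Finset.sum_eq_zero
      intro i _
      have : a ≤ L i := Finset.inf'_le _ (Finset.mem_univ i)
      exact max_eq_right (by linarith)
    have hfb : β ≤ f b := by
      have h1 : max (b - L ⟨0, hn⟩) 0 ≤ f b :=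
        Finset.single_le_sum (f := fun i => max (b - L i) 0)
          (fun i _ => le_max_right _ _) (Finset.mem_univ _)
      have h2 : L ⟨0, hn⟩ ≤ Finset.univ.sup' hne L := Finset.le_sup' _ (Finset.mem_univ _)
      have : β ≤ max (b - L ⟨0, hn⟩) 0 := le_max_of_le_left (by simp [hb]; linarith)
      linarith
    obtain ⟨α, hαmem, hα⟩ := intermediate_value_Icc hab hcont.continuousOn
      (show β ∈ Set.Icc (f a) (f b) from ⟨by rw [hfa]; exact hβ.le, hfb⟩)
    refine ⟨α, hα, ?_⟩
    -- uniqueness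
    have key : ∀ {c d : ℝ}, f c = β → f d = β → c ≤ d → c = d := by
      intro c d hc hd hcd
      by_contra hne'
      have hlt : c < d := lt_of_le_of_ne hcd hne'
      obtain ⟨i, _, hi⟩ : ∃ i ∈ Finset.univ, 0 < max (c - L i) 0 := by
        by_contra h
        push_neg at h
        have : f c = 0 := Finset.sum_eq_zero fun i hi => le_antisymm (h i hi) (le_max_right _ _)
        rw [hc] at this; linarith
      have : f c < f d := by
        apply Finset.sum_lt_sum (fun j _ => hmono hcd j)
        refine ⟨i, Finset.mem_univ _, ?_⟩
        have hci : L i < c := by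
          by_contra h
          push_neg at h
          rw [max_eq_right (by linarith)] at hi; linarith
        rw [max_eq_left (by linarith), max_eq_left (by linarith)]
        linarith
      rw [hc, hd] at this; linarith
    intro γ hγ
    rcases le_total γ α with h | h
    · exact key hγ hα h
    · exact (key hα hγ h).symm
  · intro α hα
    set y : Fin n → ℝ := fun i => max (α - L i) 0 / β with hy
    have hy_nonneg : ∀ i, 0 ≤ y i := fun i => div_nonneg (le_max_right _ _) hβ.le
    have hy_sum : ∑ i, y i = 1 := by
      simp only [hy, ← Finset.sum_div, hα]
      field_simp
    refine ⟨hy_nonneg, hy_sum, ?_⟩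
    intro x hx hxs
    have hβy : ∀ i, β * y i = max (α - L i) 0 := by
      intro i; rw [hy]; field_simp
    have hmax : ∀ i, L i + β * y i = max (L i) α := by
      intro i
      rw [hβy]
      rcases le_total α (L i) with h | h
      · rw [max_eq_right (by linarith), max_eq_left h]; ring
      · rw [max_eq_left (by linarith), max_eq_right h]; ring
    have step1 : ∀ i, α * (x i - y i) + (max (L i) α - α) * (x i - y i)
        ≤ (L i * x i + β/2*(x i)^2) - (L i * y i + β/2*(y i)^2) := by
      intro i
      have h := hmax i
      have : max (L i) α = L i + β * y i := h.symm
      rw [this]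
      nlinarith [sq_nonneg (x i - y i), hβ]
    have hterm : ∀ i, 0 ≤ (max (L i) α - α) * (x i - y i) := by
      intro i
      rcases le_total (L i) α with h | h
      · rw [max_eq_right h]; simp
      · have hyi : y i = 0 := by
          rw [hy]; simp only
          rw [max_eq_right (by linarith)]; simp
        rw [max_eq_left h, hyi]
        have := hx i
        nlinarith
    have hsum : 0 ≤ ∑ i, (α * (x i - y i) + (max (L i) α - α) * (x i - y i)) := by
      rw [Finset.sum_add_distrib, ← Finset.mul_sum, Finset.sum_sub_distrib, hxs, hy_sum]
      have := Finset.sum_nonneg (fun i (_ : i ∈ Finset.univ) => hterm i)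
      simpa using this
    have hsum2 : ∑ i, (α * (x i - y i) + (max (L i) α - α) * (x i - y i))
        ≤ ∑ i, ((L i * x i + β/2*(x i)^2) - (L i * y i + β/2*(y i)^2)) :=
      Finset.sum_le_sum fun i _ => step1 i
    have hexp : ∑ i, ((L i * x i + β/2*(x i)^2) - (L i * y i + β/2*(y i)^2))
        = ((∑ i, L i * x i) + β/2 * ∑ i, (x i)^2) - ((∑ i, L i * y i) + β/2 * ∑ i, (y i)^2) := by
      rw [Finset.sum_sub_distrib, Finset.sum_add_distrib, Finset.sum_add_distrib,
        Finset.mul_sum, Finset.mul_sum]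
    rw [hexp] at hsum2
    have := le_trans hsum hsum2
    simp only [hy] at this
    linarith
end

section
/- Let R ∈ ℝ^n with ‖[R]^+‖₁ > 0 and let x = [R]^+ / ‖[R]^+‖₁. Let L ∈ ℝ^n and c ∈ ℝ satisfy R = c·𝟙 − L. Then with β = ‖[R]^+‖₁ and α = c, we have x = [α·𝟙 − L]^+ / β and ‖[α·𝟙 − L]^+‖₁ = β; moreover α is the unique real number with this property. -/
open Finset

lemma key_mono (n : ℕ) (L : Fin n → ℝ) (a b : ℝ) (hab : a < b)
    (hpos : 0 < ∑ i, max (a - L i) 0) :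
    ∑ i, max (a - L i) 0 < ∑ i, max (b - L i) 0 := by
  have h0 : (0 : ℝ) = ∑ _i : Fin n, (0 : ℝ) := by simp
  obtain ⟨i, _, hi⟩ := Finset.exists_lt_of_sum_lt (f := fun _ => (0:ℝ))
    (g := fun i => max (a - L i) 0) (by simpa using hpos)
  apply Finset.sum_lt_sum
  · intro j _
    exact max_le_max (by linarith) le_rfl
  · refine ⟨i, Finset.mem_univ i, ?_⟩
    have hai : 0 < a - L i := by
      rcases lt_or_ge 0 (a - L i) with h | h
      · exact h
      · simp [max_eq_right h] at hi
    calc max (a - L i) 0 = a - L i := max_eq_left hai.le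
      _ < b - L i := by linarith
      _ ≤ max (b - L i) 0 := le_max_left _ _

theorem stmt_12 (n : ℕ) (R L x : Fin n → ℝ) (c : ℝ)
    (hpos : 0 < ∑ i, max (R i) 0)
    (hx : ∀ i, x i = max (R i) 0 / ∑ j, max (R j) 0)
    (hRL : ∀ i, R i = c - L i) :
    (∀ i, x i = max (c - L i) 0 / ∑ j, max (R j) 0) ∧
    (∑ i, max (c - L i) 0 = ∑ j, max (R j) 0) ∧
    ∀ α : ℝ, (∑ i, max (α - L i) 0 = ∑ j, max (R j) 0) → α = c := by
  have hfun : ∀ i, max (c - L i) 0 = max (R i) 0 := fun i => by rw [hRL i]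
  have hsum : ∑ i, max (c - L i) 0 = ∑ j, max (R j) 0 :=
    Finset.sum_congr rfl fun i _ => hfun i
  refine ⟨fun i => by rw [hx i, hfun i], hsum, ?_⟩
  intro α hα
  rcases lt_trichotomy α c with h | h | h
  · have := key_mono n L α c h (by rw [hα]; exact hpos)
    rw [hα, hsum] at this; exact absurd this (lt_irrefl _)
  · exact h
  · have := key_mono n L c α h (by rw [hsum]; exact hpos)
    rw [hα, hsum] at this; exact absurd this (lt_irrefl _)
end

section
/- Let x₁, ..., x_T be positive reals and L > 0. Suppose for each t, c_t ≥ 0 and c_t ≤ L·√(x_t − x_{t-1})/√(x_t) where x_0 > 0 and x_{t-1} ≤ x_t. Then ∑_{t=1}^T c_t ≤ L·√T·√(ln x_T − ln x_0). -/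
/-!
Write `a t = (x t - x (t - 1)) / x t`, so that `c t ≤ L √(a t)`. Cauchy–Schwarz gives
`∑ √(a t) ≤ √T · √(∑ a t)`, and `∑ a t ≤ log x_T - log x_0` because each term is bounded by the
corresponding increment of `log` (the inequality `1 - 1/y ≤ log y`), which telescopes.
-/

open Finset

theorem Real.sub_div_le_log_sub_log {a b : ℝ} (ha : 0 < a) (hb : 0 < b) :
    (b - a) / b ≤ Real.log b - Real.log a := by
  have h := Real.one_sub_inv_le_log_of_pos (div_pos hb ha)
  rwa [Real.log_div hb.ne' ha.ne', inv_div, ← div_self hb.ne', ← sub_div] at h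

theorem Real.sum_Icc_sub_div_le_log_sub_log {x : ℕ → ℝ} (hpos : ∀ t, 0 < x t) (T : ℕ) :
    ∑ t ∈ Icc 1 T, (x t - x (t - 1)) / x t ≤ Real.log (x T) - Real.log (x 0) := by
  induction T with
  | zero => simp
  | succ n ih =>
    rw [sum_Icc_succ_top (Nat.le_add_left 1 n), Nat.add_sub_cancel]
    linarith [Real.sub_div_le_log_sub_log (hpos n) (hpos (n + 1))]

theorem Real.sum_sqrt_le_sqrt_card_mul_sqrt_sum {ι : Type*} (s : Finset ι) {a : ι → ℝ}
    (ha : ∀ i ∈ s, 0 ≤ a i) : ∑ i ∈ s, √(a i) ≤ √(#s : ℝ) * √(∑ i ∈ s, a i) := by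
  rw [← Real.sqrt_mul (Nat.cast_nonneg _)]
  apply Real.le_sqrt_of_sq_le
  calc (∑ i ∈ s, √(a i)) ^ 2 ≤ #s * ∑ i ∈ s, √(a i) ^ 2 := sq_sum_le_card_mul_sum_sq
    _ = #s * ∑ i ∈ s, a i := by rw [sum_congr rfl fun i hi => Real.sq_sqrt (ha i hi)]

theorem stmt_14_general (T : ℕ) (x : ℕ → ℝ) (c : ℕ → ℝ) (L : ℝ)
    (hL : 0 < L)
    (hpos : ∀ t, 0 < x t)
    (hmono : ∀ t ∈ Finset.Icc 1 T, x (t - 1) ≤ x t)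
    (hc : ∀ t ∈ Finset.Icc 1 T,
      c t ≤ L * Real.sqrt (x t - x (t - 1)) / Real.sqrt (x t)) :
    ∑ t ∈ Finset.Icc 1 T, c t ≤
      L * Real.sqrt T * Real.sqrt (Real.log (x T) - Real.log (x 0)) := by
  set a : ℕ → ℝ := fun t => (x t - x (t - 1)) / x t
  have ha : ∀ t ∈ Icc 1 T, 0 ≤ a t := fun t ht =>
    div_nonneg (sub_nonneg.2 (hmono t ht)) (hpos t).le
  calc ∑ t ∈ Icc 1 T, c t ≤ ∑ t ∈ Icc 1 T, L * √(a t) :=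
        sum_le_sum fun t ht => (hc t ht).trans_eq <| by
          rw [Real.sqrt_div' _ (hpos t).le, mul_div_assoc]
    _ = L * ∑ t ∈ Icc 1 T, √(a t) := (mul_sum ..).symm
    _ ≤ L * (√(T : ℝ) * √(∑ t ∈ Icc 1 T, a t)) := by
        gcongr
        simpa using Real.sum_sqrt_le_sqrt_card_mul_sqrt_sum (Icc 1 T) ha
    _ ≤ L * √(T : ℝ) * √(Real.log (x T) - Real.log (x 0)) := by
        rw [← mul_assoc]
        gcongr
        exact Real.sum_Icc_sub_div_le_log_sub_log hpos T

theorem stmt_14 (T : ℕ) (x : ℕ → ℝ) (c : ℕ → ℝ) (L : ℝ)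
    (hL : 0 < L)
    (hpos : ∀ t, 0 < x t)
    (hmono : ∀ t ∈ Finset.Icc 1 T, x (t - 1) ≤ x t)
    (hc0 : ∀ t ∈ Finset.Icc 1 T, 0 ≤ c t)
    (hc : ∀ t ∈ Finset.Icc 1 T,
      c t ≤ L * Real.sqrt (x t - x (t - 1)) / Real.sqrt (x t)) :
    ∑ t ∈ Finset.Icc 1 T, c t ≤
      L * Real.sqrt T * Real.sqrt (Real.log (x T) - Real.log (x 0)) :=
  stmt_14_general T x c L hL hpos hmono hc
end

section
/- Let Q ∈ ℝ^n, Q ≥ 0, with ‖Q‖₁ > 0, let x = Q/‖Q‖₁, let l ∈ ℝ^n, and set Q' = [Q + ⟨l, x⟩·𝟙 − l]^+. Suppose ‖Q'‖₁ > 0 and let x' = Q'/‖Q'‖₁, β = ‖Q‖₁, β' = ‖Q'‖₁. Then x' is the minimizer over Δ^n of the function y ↦ ⟨l − ⟨l,x⟩·𝟙, y⟩ + (β'/2)‖y‖₂² − (β/2)‖y‖₂² + (β/2)‖y − x‖₂². -/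
open Finset

theorem stmt_16 (n : ℕ) (Q l : Fin n → ℝ)
    (hQ : ∀ i, 0 ≤ Q i) (hQpos : 0 < ∑ i, Q i)
    (x : Fin n → ℝ) (hx : ∀ i, x i = Q i / ∑ j, Q j)
    (Q' : Fin n → ℝ)
    (hQ' : ∀ i, Q' i = max (Q i + ((∑ j, l j * x j) - l i)) 0)
    (hQ'pos : 0 < ∑ i, Q' i)
    (x' : Fin n → ℝ) (hx' : ∀ i, x' i = Q' i / ∑ j, Q' j)
    (β β' : ℝ) (hβ : β = ∑ i, Q i) (hβ' : β' = ∑ i, Q' i) :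
    ∀ y : Fin n → ℝ, (∀ i, 0 ≤ y i) → (∑ i, y i = 1) →
      (∑ i, (l i - ∑ j, l j * x j) * x' i) + β' / 2 * (∑ i, (x' i) ^ 2)
        - β / 2 * (∑ i, (x' i) ^ 2) + β / 2 * (∑ i, (x' i - x i) ^ 2) ≤
      (∑ i, (l i - ∑ j, l j * x j) * y i) + β' / 2 * (∑ i, (y i) ^ 2)
        - β / 2 * (∑ i, (y i) ^ 2) + β / 2 * (∑ i, (y i - x i) ^ 2) := by
  intro y hy hysum
  have hβpos : 0 < β := hβ ▸ hQpos
  have hβ'pos : 0 < β' := hβ' ▸ hQ'pos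
  set S := ∑ j, l j * x j with hS
  have hβx : ∀ i, β * x i = Q i := by
    intro i
    rw [hx i, hβ]
    field_simp
  have hβ'x' : ∀ i, β' * x' i = Q' i := by
    intro i
    rw [hx' i, hβ']
    field_simp
  have key : ∀ i, ((l i - S) * y i + β' / 2 * (y i) ^ 2 - β / 2 * (y i) ^ 2
        + β / 2 * (y i - x i) ^ 2)
      - ((l i - S) * x' i + β' / 2 * (x' i) ^ 2 - β / 2 * (x' i) ^ 2
        + β / 2 * (x' i - x i) ^ 2)
    = β' / 2 * (y i - x' i) ^ 2 + (Q' i - (Q i + (S - l i))) * (y i - x' i) := by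
    intro i
    linear_combination (x' i - y i) * hβx i + (y i - x' i) * hβ'x' i
  have keynn : ∀ i, 0 ≤ β' / 2 * (y i - x' i) ^ 2
      + (Q' i - (Q i + (S - l i))) * (y i - x' i) := by
    intro i
    rcases le_or_gt 0 (Q i + (S - l i)) with h | h
    · have hq : Q' i = Q i + (S - l i) := by rw [hQ' i]; exact max_eq_left h
      rw [hq]
      nlinarith [sq_nonneg (y i - x' i), hβ'pos.le]
    · have hQ'0 : Q' i = 0 := by rw [hQ' i]; exact max_eq_right h.le
      have hx'0 : x' i = 0 := by rw [hx' i, hQ'0]; simp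
      rw [hQ'0, hx'0]
      nlinarith [hy i, sq_nonneg (y i), hβ'pos.le]
  have e : ∀ z : Fin n → ℝ,
      (∑ i, (l i - S) * z i) + β' / 2 * (∑ i, (z i) ^ 2)
        - β / 2 * (∑ i, (z i) ^ 2) + β / 2 * (∑ i, (z i - x i) ^ 2)
      = ∑ i, ((l i - S) * z i + β' / 2 * (z i) ^ 2 - β / 2 * (z i) ^ 2
        + β / 2 * (z i - x i) ^ 2) := by
    intro z
    rw [Finset.sum_add_distrib, Finset.sum_sub_distrib, Finset.sum_add_distrib,
      ← Finset.mul_sum, ← Finset.mul_sum, ← Finset.mul_sum]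
  rw [← sub_nonneg, e y, e x', ← Finset.sum_sub_distrib]
  refine Finset.sum_nonneg fun i _ => ?_
  rw [key i]
  exact keynn i
end
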